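/- Pointwise energy inequality with equality characterization: for every μ ∈ ℂ with |μ| < 1 and all vectors a = (a₁, a₂), b = (b₁, b₂) ∈ ℝ², with P = P(μ) and J = [[0, −1], [1, 0]], one has (1/2)‖P·a‖² + (1/2)‖P·b‖² ≥ a₁·b₂ − a₂·b₁, with equality if and only if P·a + J·P·b = 0. -/

import Mathlib

/-! `P(μ)` has determinant one, so `a₀b₁ − a₁b₀ = (Pa)₀(Pb)₁ − (Pa)₁(Pb)₀`, and for any `u, v ∈ ℝ²`
the identity `½‖u‖² + ½‖v‖² = (u₀v₁ − u₁v₀) + ½‖u + Jv‖²` holds. Applied to `u = Pa`, `v = Pb`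
this gives the inequality, with defect `½‖Pa + JPb‖²`. -/

noncomputable def Pmat (μ : ℂ) : Matrix (Fin 2) (Fin 2) ℝ :=
  (1 / Real.sqrt (1 - ‖μ‖ ^ 2)) •
    !![1 - μ.re, -μ.im; -μ.im, 1 + μ.re]

def Jmat : Matrix (Fin 2) (Fin 2) ℝ := !![0, -1; 1, 0]

noncomputable def toE2 (w : Fin 2 → ℝ) : EuclideanSpace ℝ (Fin 2) := WithLp.toLp 2 w

open Matrix

theorem Matrix.mulVec_cross_mulVec {R : Type*} [CommRing R] (M : Matrix (Fin 2) (Fin 2) R)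
    (a b : Fin 2 → R) :
    (M *ᵥ a) 0 * (M *ᵥ b) 1 - (M *ᵥ a) 1 * (M *ᵥ b) 0 = M.det * (a 0 * b 1 - a 1 * b 0) := by
  simp only [mulVec, dotProduct, Fin.sum_univ_two, det_fin_two]
  ring

theorem det_Pmat {μ : ℂ} (hμ : ‖μ‖ < 1) : (Pmat μ).det = 1 := by
  have hpos : 0 < 1 - ‖μ‖ ^ 2 := by nlinarith [norm_nonneg μ]
  have hnorm : ‖μ‖ ^ 2 = μ.re ^ 2 + μ.im ^ 2 := by
    rw [Complex.sq_norm, Complex.normSq_apply]; ring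
  rw [Pmat, det_smul, det_fin_two_of, Fintype.card_fin, div_pow, Real.sq_sqrt hpos.le, hnorm]
  rw [hnorm] at hpos
  field_simp
  ring

theorem norm_toE2_sq (w : Fin 2 → ℝ) : ‖toE2 w‖ ^ 2 = w 0 ^ 2 + w 1 ^ 2 := by
  simp [toE2, EuclideanSpace.norm_sq_eq, Fin.sum_univ_two]

theorem Jmat_mulVec (w : Fin 2 → ℝ) : Jmat *ᵥ w = ![-w 1, w 0] := by
  ext i; fin_cases i <;> simp [Jmat, mulVec, dotProduct, Fin.sum_univ_two]

theorem half_norm_sq_add_half_norm_sq (u v : Fin 2 → ℝ) :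
    (1 / 2) * ‖toE2 u‖ ^ 2 + (1 / 2) * ‖toE2 v‖ ^ 2
      = (u 0 * v 1 - u 1 * v 0) + (1 / 2) * ‖toE2 (u + Jmat *ᵥ v)‖ ^ 2 := by
  simp only [norm_toE2_sq, Pi.add_apply, Jmat_mulVec, Matrix.cons_val_zero, Matrix.cons_val_one]
  ring

theorem cross_le_energy_and_eq_iff_of_det_eq_one {M : Matrix (Fin 2) (Fin 2) ℝ} (hM : M.det = 1)
    (a b : Fin 2 → ℝ) :
    a 0 * b 1 - a 1 * b 0 ≤ (1 / 2) * ‖toE2 (M *ᵥ a)‖ ^ 2 + (1 / 2) * ‖toE2 (M *ᵥ b)‖ ^ 2 ∧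
    ((1 / 2) * ‖toE2 (M *ᵥ a)‖ ^ 2 + (1 / 2) * ‖toE2 (M *ᵥ b)‖ ^ 2 = a 0 * b 1 - a 1 * b 0 ↔
      M *ᵥ a + Jmat *ᵥ (M *ᵥ b) = 0) := by
  rw [half_norm_sq_add_half_norm_sq, mulVec_cross_mulVec, hM, one_mul]
  refine ⟨by simp only [le_add_iff_nonneg_right]; positivity, ?_⟩
  simp [toE2]

/-- Pointwise energy inequality with equality characterization: for `|μ| < 1`,
`P = P(μ)`, `J = [[0,−1],[1,0]]` and all `a, b ∈ ℝ²`,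
`(1/2)‖P·a‖² + (1/2)‖P·b‖² ≥ a₁·b₂ − a₂·b₁`, with equality iff `P·a + J·P·b = 0`. -/
theorem pointwise_energy_inequality (μ : ℂ) (hμ : ‖μ‖ < 1) (a b : Fin 2 → ℝ) :
    a 0 * b 1 - a 1 * b 0 ≤
      (1 / 2) * ‖toE2 ((Pmat μ).mulVec a)‖ ^ 2
        + (1 / 2) * ‖toE2 ((Pmat μ).mulVec b)‖ ^ 2 ∧
    ((1 / 2) * ‖toE2 ((Pmat μ).mulVec a)‖ ^ 2
        + (1 / 2) * ‖toE2 ((Pmat μ).mulVec b)‖ ^ 2 = a 0 * b 1 - a 1 * b 0 ↔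
      (Pmat μ).mulVec a + Jmat.mulVec ((Pmat μ).mulVec b) = 0) :=
  cross_le_energy_and_eq_iff_of_det_eq_one (det_Pmat hμ) a b
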